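/- Let v : Fin n → ℂ be a unit vector, let ρ := v vᴴ be the corresponding rank-one projection, and let σ be a density matrix on Fin n such that σ · v = p₀ • v for some real p₀ > 0 (v is an eigenvector of σ with nonzero eigenvalue p₀). Then for every ε ∈ [0,1], sInf { Re Tr[Λ·σ] : Λ is a test with Re Tr[Λ·ρ] ≥ 1 − ε } = (1 − ε) · p₀; in particular, when ε < 1, D_h^ε(ρ‖σ) = −log₂((1 − ε) · p₀), and the infimum is attained by Λ = (1 − ε) • ρ. -/

import Mathlib

/-!
Since `σ` is Hermitian and `σ v = p₀ v`, `σ` commutes with the projection `ρ = v vᴴ`, so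
`σ - p₀ ρ = (1 - ρ) σ (1 - ρ)` is positive semidefinite. Hence every test `Λ` with
`Re Tr[Λ ρ] ≥ 1 - ε` has `Re Tr[Λ σ] ≥ p₀ Re Tr[Λ ρ] ≥ (1 - ε) p₀`, and `Λ = (1 - ε) ρ` is
a test attaining this bound.
-/

open Matrix Kronecker
open scoped ComplexOrder

open scoped Classical in
noncomputable def matSqrt {n : Type*} [Fintype n] [DecidableEq n] (A : Matrix n n ℂ) :
    Matrix n n ℂ :=
  if h : A.PosSemidef then
    (h.1.eigenvectorUnitary : Matrix n n ℂ) *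
      diagonal ((↑) ∘ (Real.sqrt ·) ∘ h.1.eigenvalues) *
      (star h.1.eigenvectorUnitary : Matrix n n ℂ)
  else 0

noncomputable def rootFidelity {n : Type*} [Fintype n] [DecidableEq n]
    (ρ σ : Matrix n n ℂ) : ℝ :=
  (matSqrt (matSqrt σ * ρ * matSqrt σ)).trace.re

noncomputable def fidelity {n : Type*} [Fintype n] [DecidableEq n]
    (ρ σ : Matrix n n ℂ) : ℝ :=
  (rootFidelity ρ σ) ^ 2

noncomputable def traceNorm {n : Type*} [Fintype n] [DecidableEq n] (A : Matrix n n ℂ) : ℝ :=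
  (matSqrt (Aᴴ * A)).trace.re

/-- The set of attainable type-II error values in hypothesis testing. -/
def testValues {n : Type*} [Fintype n] [DecidableEq n] (ρ σ : Matrix n n ℂ) (ε : ℝ) :
    Set ℝ :=
  { x | ∃ Λ : Matrix n n ℂ, Λ.PosSemidef ∧ (1 - Λ).PosSemidef ∧
      1 - ε ≤ (Λ * ρ).trace.re ∧ x = (Λ * σ).trace.re }

/-- ε-hypothesis-testing relative entropy. -/
noncomputable def Dh {n : Type*} [Fintype n] [DecidableEq n]
    (ρ σ : Matrix n n ℂ) (ε : ℝ) : ℝ :=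
  - Real.logb 2 (sInf (testValues ρ σ ε))

/-- GHZ unit vector. -/
noncomputable def ghz (M K : ℕ) : (Fin M → Fin K) → ℂ :=
  fun f => if ∃ c, ∀ m, f m = c then ((Real.sqrt K : ℂ))⁻¹ else 0

/-- GHZ rank-one projection. -/
noncomputable def ghzProj (M K : ℕ) : Matrix (Fin M → Fin K) (Fin M → Fin K) ℂ :=
  Matrix.vecMulVec (ghz M K) (star ∘ ghz M K)

/-- The twisting unitary. -/
def twist (M K d : ℕ)
    (U : (Fin M → Fin K) → Matrix (Fin M → Fin d) (Fin M → Fin d) ℂ) :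
    Matrix ((Fin M → Fin K) × (Fin M → Fin d)) ((Fin M → Fin K) × (Fin M → Fin d)) ℂ :=
  Matrix.of fun p q => if p.1 = q.1 then U p.1 p.2 q.2 else 0

/-- The privacy test `Π = W (Φ ⊗ 1) Wᴴ`. -/
noncomputable def privacyTest (M K d : ℕ)
    (U : (Fin M → Fin K) → Matrix (Fin M → Fin d) (Fin M → Fin d) ℂ) :
    Matrix ((Fin M → Fin K) × (Fin M → Fin d)) ((Fin M → Fin K) × (Fin M → Fin d)) ℂ :=
  twist M K d U * (ghzProj M K ⊗ₖ (1 : Matrix (Fin M → Fin d) (Fin M → Fin d) ℂ)) *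
    (twist M K d U)ᴴ

/-- The private state `γ = W (Φ ⊗ ω) Wᴴ`. -/
noncomputable def privateState (M K d : ℕ)
    (U : (Fin M → Fin K) → Matrix (Fin M → Fin d) (Fin M → Fin d) ℂ)
    (ω : Matrix (Fin M → Fin d) (Fin M → Fin d) ℂ) :
    Matrix ((Fin M → Fin K) × (Fin M → Fin d)) ((Fin M → Fin K) × (Fin M → Fin d)) ℂ :=
  twist M K d U * (ghzProj M K ⊗ₖ ω) * (twist M K d U)ᴴ

/-- A vector on `𝒦 × 𝒮` is product across the bipartition `J | Jᶜ` of the parties. -/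
def IsProductAcross {M K d : ℕ} (J : Set (Fin M))
    (v : (Fin M → Fin K) × (Fin M → Fin d) → ℂ) : Prop :=
  ∃ (v₁ : ((↥J) → Fin K) × ((↥J) → Fin d) → ℂ)
    (v₂ : ((↥(Jᶜ)) → Fin K) × ((↥(Jᶜ)) → Fin d) → ℂ),
    ∀ (f : Fin M → Fin K) (x : Fin M → Fin d),
      v (f, x) = v₁ (fun m => f m.1, fun m => x m.1) * v₂ (fun m => f m.1, fun m => x m.1)

/-- Biseparability: a finite convex combination of pure states, each product across
some nontrivial bipartition of the parties. -/
def Biseparable {M K d : ℕ}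
    (σ : Matrix ((Fin M → Fin K) × (Fin M → Fin d))
      ((Fin M → Fin K) × (Fin M → Fin d)) ℂ) : Prop :=
  ∃ (N : ℕ) (p : Fin N → ℝ) (w : Fin N → ((Fin M → Fin K) × (Fin M → Fin d)) → ℂ)
    (J : Fin N → Set (Fin M)),
    (∀ t, 0 ≤ p t) ∧ (∑ t, p t = 1) ∧
    (∀ t, ∑ i, ‖w t i‖ ^ 2 = 1) ∧
    (∀ t, J t ≠ ∅ ∧ J t ≠ Set.univ ∧ IsProductAcross (J t) (w t)) ∧
    σ = ∑ t, (p t : ℂ) • Matrix.vecMulVec (w t) (star ∘ w t)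

/-- Partial trace over the second tensor factor. -/
noncomputable def partialTrace₂ {A B : Type*} [Fintype B] (τ : Matrix (A × B) (A × B) ℂ) :
    Matrix A A ℂ :=
  Matrix.of fun a a' => ∑ b, τ (a, b) (a', b)

/-- Matrix logarithm of a Hermitian matrix via the spectral functional calculus. -/
noncomputable def matLog {n : Type*} [Fintype n] [DecidableEq n] (A : Matrix n n ℂ) :
    Matrix n n ℂ :=
  if hA : A.IsHermitian then
    (hA.eigenvectorUnitary : Matrix n n ℂ) *
      Matrix.diagonal (fun i => (Real.log (hA.eigenvalues i) : ℂ)) *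
      (star hA.eigenvectorUnitary : Matrix n n ℂ)
  else 0

lemma Matrix.PosSemidef.trace_mul_nonneg {𝕜 ι : Type*} [RCLike 𝕜] [Fintype ι]
    {A B : Matrix ι ι 𝕜} (hA : A.PosSemidef) (hB : B.PosSemidef) : 0 ≤ (A * B).trace := by
  obtain ⟨m, w, rfl⟩ := posSemidef_iff_eq_sum_vecMulVec.mp hB
  rw [Finset.mul_sum, trace_sum]
  refine Finset.sum_nonneg fun i _ => ?_
  rw [mul_vecMulVec, trace_vecMulVec, dotProduct_comm]
  exact hA.dotProduct_mulVec_nonneg (w i)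

lemma Matrix.PosSemidef.one_sub_smul {𝕜 ι : Type*} [RCLike 𝕜] [Fintype ι] [DecidableEq ι]
    {P : Matrix ι ι 𝕜} (hP : (1 - P).PosSemidef) {t : ℝ} (ht0 : 0 ≤ t) (ht1 : t ≤ 1) :
    (1 - t • P).PosSemidef := by
  have : 1 - t • P = (1 - t) • (1 : Matrix ι ι 𝕜) + t • (1 - P) := by module
  exact this ▸ (PosSemidef.one.smul (sub_nonneg.mpr ht1)).add (hP.smul ht0)

section RankOneProjection

variable {𝕜 ι : Type*} [RCLike 𝕜] [Fintype ι] {v : ι → 𝕜}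

lemma star_dotProduct_self_eq_sum_norm_sq (v : ι → 𝕜) :
    star v ⬝ᵥ v = ((∑ i, ‖v i‖ ^ 2 : ℝ) : 𝕜) := by
  simp [dotProduct, RCLike.conj_mul]

lemma vecMulVec_star_mul_self (hv : star v ⬝ᵥ v = 1) :
    vecMulVec v (star v) * vecMulVec v (star v) = vecMulVec v (star v) := by
  rw [vecMulVec_mul_vecMulVec, hv, one_smul]

lemma trace_vecMulVec_star (hv : star v ⬝ᵥ v = 1) : (vecMulVec v (star v)).trace = 1 := by
  rw [trace_vecMulVec, dotProduct_comm, hv]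

lemma posSemidef_one_sub_vecMulVec_star [DecidableEq ι] (hv : star v ⬝ᵥ v = 1) :
    (1 - vecMulVec v (star v)).PosSemidef := by
  have hP : (1 - vecMulVec v (star v)).IsHermitian :=
    isHermitian_one.sub (posSemidef_vecMulVec_self_star v).isHermitian
  have hsq : (1 - vecMulVec v (star v))ᴴ * (1 - vecMulVec v (star v)) =
      1 - vecMulVec v (star v) := by
    rw [hP.eq, sub_mul, mul_sub, mul_sub, vecMulVec_star_mul_self hv]
    simp
  exact hsq ▸ posSemidef_conjTranspose_mul_self _

variable {σ : Matrix ι ι 𝕜} {c : ℝ}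

lemma Matrix.PosSemidef.nonneg_of_mulVec_eq (hσ : σ.PosSemidef) (hv : star v ⬝ᵥ v = 1)
    (h : σ *ᵥ v = c • v) : 0 ≤ c := by
  have := hσ.dotProduct_mulVec_nonneg v
  rwa [h, dotProduct_smul, hv, RCLike.real_smul_eq_coe_mul, mul_one, RCLike.ofReal_nonneg] at this

lemma mul_vecMulVec_star_of_mulVec_eq (h : σ *ᵥ v = c • v) :
    σ * vecMulVec v (star v) = c • vecMulVec v (star v) := by
  rw [mul_vecMulVec, h, smul_vecMulVec]

lemma vecMulVec_star_mul_of_mulVec_eq (hσ : σ.IsHermitian) (h : σ *ᵥ v = c • v) :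
    vecMulVec v (star v) * σ = c • vecMulVec v (star v) := by
  have : star v ᵥ* σ = c • star v := by
    conv_lhs => rw [← hσ.eq]
    rw [← star_mulVec, h, star_smul, star_trivial]
  rw [vecMulVec_mul, this, vecMulVec_smul]

lemma posSemidef_sub_smul_vecMulVec_star [DecidableEq ι] (hσ : σ.PosSemidef)
    (hv : star v ⬝ᵥ v = 1) (h : σ *ᵥ v = c • v) :
    (σ - c • vecMulVec v (star v)).PosSemidef := by
  have hcompress : (1 - vecMulVec v (star v)) * σ * (1 - vecMulVec v (star v))ᴴ =
      σ - c • vecMulVec v (star v) := by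
    rw [(posSemidef_one_sub_vecMulVec_star hv).isHermitian.eq, sub_mul, one_mul,
      vecMulVec_star_mul_of_mulVec_eq hσ.isHermitian h, mul_sub, mul_one, sub_mul,
      mul_vecMulVec_star_of_mulVec_eq h, smul_mul, vecMulVec_star_mul_self hv]
    abel
  exact hcompress ▸ hσ.mul_mul_conjTranspose_same _

end RankOneProjection

section HypothesisTesting

variable {ι : Type*} [Fintype ι] {v : ι → ℂ} {ρ σ : Matrix ι ι ℂ} {c ε : ℝ}

lemma le_re_trace_mul_of_posSemidef_sub {Λ : Matrix ι ι ℂ} (hΛ : Λ.PosSemidef)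
    (hσρ : (σ - c • ρ).PosSemidef) : c * (Λ * ρ).trace.re ≤ (Λ * σ).trace.re := by
  have h := (Complex.nonneg_iff.mp (hΛ.trace_mul_nonneg hσρ)).1
  rw [mul_sub, trace_sub, Matrix.mul_smul, trace_smul, Complex.sub_re, Complex.real_smul,
    Complex.re_ofReal_mul] at h
  linarith

lemma le_of_mem_testValues [DecidableEq ι] (hc : 0 ≤ c) (hσρ : (σ - c • ρ).PosSemidef)
    {x : ℝ} (hx : x ∈ testValues ρ σ ε) : (1 - ε) * c ≤ x := by
  obtain ⟨Λ, hΛ, -, hpass, rfl⟩ := hx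
  calc (1 - ε) * c ≤ c * (Λ * ρ).trace.re := by
        rw [mul_comm]
        exact mul_le_mul_of_nonneg_left hpass hc
    _ ≤ (Λ * σ).trace.re := le_re_trace_mul_of_posSemidef_sub hΛ hσρ

lemma re_trace_smul_vecMulVec_star_mul_self (hv : star v ⬝ᵥ v = 1) (t : ℝ) :
    ((t • vecMulVec v (star v)) * vecMulVec v (star v)).trace.re = t := by
  simp [vecMulVec_star_mul_self hv, trace_vecMulVec_star hv]

lemma re_trace_smul_vecMulVec_star_mul_of_mulVec_eq (hσ : σ.IsHermitian)
    (hv : star v ⬝ᵥ v = 1) (h : σ *ᵥ v = c • v) (t : ℝ) :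
    ((t • vecMulVec v (star v)) * σ).trace.re = t * c := by
  simp [vecMulVec_star_mul_of_mulVec_eq hσ h, trace_vecMulVec_star hv]

lemma isLeast_testValues_vecMulVec_star [DecidableEq ι] (hσ : σ.PosSemidef)
    (hv : star v ⬝ᵥ v = 1) (h : σ *ᵥ v = c • v) (hε0 : 0 ≤ ε) (hε1 : ε ≤ 1) :
    IsLeast (testValues (vecMulVec v (star v)) σ ε) ((1 - ε) * c) := by
  refine ⟨⟨(1 - ε) • vecMulVec v (star v),
    (posSemidef_vecMulVec_self_star v).smul (by linarith),
    (posSemidef_one_sub_vecMulVec_star hv).one_sub_smul (by linarith) (by linarith), ?_, ?_⟩,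
    fun _ => le_of_mem_testValues (hσ.nonneg_of_mulVec_eq hv h)
      (posSemidef_sub_smul_vecMulVec_star hσ hv h)⟩
  · rw [re_trace_smul_vecMulVec_star_mul_self hv]
  · rw [re_trace_smul_vecMulVec_star_mul_of_mulVec_eq hσ.isHermitian hv h]

end HypothesisTesting

theorem stmt_9_general (n : ℕ) (v : Fin n → ℂ) (hv : ∑ i, ‖v i‖ ^ 2 = 1)
    (σ : Matrix (Fin n) (Fin n) ℂ) (hσ : σ.PosSemidef)
    (p₀ : ℝ) (heig : σ.mulVec v = p₀ • v)
    (ε : ℝ) (hε0 : 0 ≤ ε) (hε1 : ε ≤ 1) :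
    sInf (testValues (Matrix.vecMulVec v (star ∘ v)) σ ε) = (1 - ε) * p₀ ∧
    (ε < 1 → Dh (Matrix.vecMulVec v (star ∘ v)) σ ε = - Real.logb 2 ((1 - ε) * p₀)) ∧
    ((1 - ε) • Matrix.vecMulVec v (star ∘ v)).PosSemidef ∧
    (1 - (1 - ε) • Matrix.vecMulVec v (star ∘ v)).PosSemidef ∧
    1 - ε ≤ (((1 - ε) • Matrix.vecMulVec v (star ∘ v)) *
        Matrix.vecMulVec v (star ∘ v)).trace.re ∧
    (((1 - ε) • Matrix.vecMulVec v (star ∘ v)) * σ).trace.re = (1 - ε) * p₀ := by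
  rw [show star ∘ v = star v from rfl]
  have hunit : star v ⬝ᵥ v = 1 := by
    rw [star_dotProduct_self_eq_sum_norm_sq, hv, RCLike.ofReal_one]
  have hsInf := (isLeast_testValues_vecMulVec_star hσ hunit heig hε0 hε1).csInf_eq
  exact ⟨hsInf, fun _ => by rw [Dh, hsInf],
    (posSemidef_vecMulVec_self_star v).smul (by linarith),
    (posSemidef_one_sub_vecMulVec_star hunit).one_sub_smul (by linarith) (by linarith),
    (re_trace_smul_vecMulVec_star_mul_self hunit _).ge,
    re_trace_smul_vecMulVec_star_mul_of_mulVec_eq hσ.isHermitian hunit heig _⟩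

/-- exact value of the hypothesis-testing quantity when `ρ = v vᴴ` is a
pure state which is an eigenvector of `σ` with eigenvalue `p₀ > 0`; the infimum is
attained by `Λ = (1 − ε) • ρ`. -/
theorem stmt_9 (n : ℕ) (v : Fin n → ℂ) (hv : ∑ i, ‖v i‖ ^ 2 = 1)
    (σ : Matrix (Fin n) (Fin n) ℂ) (hσ : σ.PosSemidef) (hσtr : σ.trace = 1)
    (p₀ : ℝ) (hp₀ : 0 < p₀) (heig : σ.mulVec v = p₀ • v)
    (ε : ℝ) (hε0 : 0 ≤ ε) (hε1 : ε ≤ 1) :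
    sInf (testValues (Matrix.vecMulVec v (star ∘ v)) σ ε) = (1 - ε) * p₀ ∧
    (ε < 1 → Dh (Matrix.vecMulVec v (star ∘ v)) σ ε = - Real.logb 2 ((1 - ε) * p₀)) ∧
    ((1 - ε) • Matrix.vecMulVec v (star ∘ v)).PosSemidef ∧
    (1 - (1 - ε) • Matrix.vecMulVec v (star ∘ v)).PosSemidef ∧
    1 - ε ≤ (((1 - ε) • Matrix.vecMulVec v (star ∘ v)) *
        Matrix.vecMulVec v (star ∘ v)).trace.re ∧
    (((1 - ε) • Matrix.vecMulVec v (star ∘ v)) * σ).trace.re = (1 - ε) * p₀ :=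
  stmt_9_general n v hv σ hσ p₀ heig ε hε0 hε1
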